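/- arXiv:0804.1440 — 2 statements merged into one kernel-verified Lean document; each statement's English description precedes it below -/
import Mathlib

section
/- For the Element Distinctness setting, let X be the set of bijections x : [N] → [N] and Y the set of non-injective functions y : [N] → [N], and let R ⊆ X × Y relate x and y iff there is exactly one i with x(i) ≠ y(i). Then: (a) every x ∈ X is related to exactly N(N−1) elements of Y; (b) for every x ∈ X and every i ∈ [N] there are exactly N−1 elements y ∈ Y with (x,y) ∈ R and x(i) ≠ y(i); (c) every y ∈ Y is related to at most 2 elements of X; (d) for every y ∈ Y and every i, there is at most 1 element x ∈ X with (x,y) ∈ R and x(i) ≠ y(i). -/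
/-!
Write `x ~ y` when `x` and `y` differ in exactly one coordinate `i`, i.e. `y = update x i v` with
`v ≠ x i`. For a bijection `x` every such update is non-injective, because `v` is also the value
of `x` at some other coordinate; so the neighbours of `x` differing at `i` correspond to the
`N - 1` values `v ≠ x i`, and summing over `i` gives `N (N - 1)`. Conversely, two bijections that
agree with `y` off `i` agree everywhere, since the value at `i` is the one value missed elsewhere.
If `y a = y b` with `a ≠ b`, a bijection `x ~ y` must differ from `y` at `a` or at `b`, whence at
most two such `x`.
-/

open Finset Function

section Update

variable {α β : Type*}

theorem Function.Surjective.not_injective_update [DecidableEq α] {x : α → β} (hx : Surjective x)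
    {i : α} {v : β} (hv : v ≠ x i) : ¬Injective (update x i v) := by
  obtain ⟨k, rfl⟩ := hx v
  have hk : k ≠ i := by rintro rfl; exact hv rfl
  exact fun hinj => hk (hinj (by simp [update_of_ne hk]))

theorem Function.Surjective.eq_of_injective_of_forall_ne {x x' : α → β} (hx : Surjective x)
    (hx' : Injective x') {i : α} (h : ∀ j ≠ i, x j = x' j) : x = x' := by
  funext j
  by_cases hj : j = i
  · obtain ⟨k, hk⟩ := hx (x' j)
    by_cases hkj : k = j
    · rw [← hk, hkj]
    · exact absurd (hx' ((h k (hj ▸ hkj)).symm.trans hk)) hkj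
  · exact h j hj

end Update

section HammingDistOne

variable {α β : Type*} [Fintype α] [DecidableEq β]

theorem hammingDist_update_self_eq_one [DecidableEq α] {x : α → β} {i : α} {v : β}
    (hv : v ≠ x i) : hammingDist x (update x i v) = 1 := by
  rw [hammingDist, card_eq_one]
  refine ⟨i, ?_⟩
  ext j
  by_cases hj : j = i
  · subst hj
    simpa using hv.symm
  · simp [hj]

theorem eq_of_hammingDist_eq_one_of_ne {x y : α → β} {i j : α} (h : hammingDist x y = 1)
    (hi : x i ≠ y i) (hj : j ≠ i) : x j = y j := by
  by_contra hxj
  exact hj (card_le_one.mp h.le j (by simpa using hxj) i (by simpa using hi))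

theorem card_filter_hammingDist_eq_one (x : α → β) (s : Finset (α → β)) :
    #(s.filter fun y => hammingDist x y = 1) =
      ∑ i, #(s.filter fun y => hammingDist x y = 1 ∧ x i ≠ y i) := by
  set t := s.filter fun y => hammingDist x y = 1
  have hdouble := sum_card_bipartiteAbove_eq_sum_card_bipartiteBelow
    (fun (y : α → β) (i : α) => x i ≠ y i) (s := t) (t := univ)
  have hone : ∀ y ∈ t, #(univ.bipartiteAbove (fun (y : α → β) (i : α) => x i ≠ y i) y) = 1 :=
    fun y hy => (mem_filter.mp hy).2
  rw [sum_congr rfl hone, sum_const, smul_eq_mul, mul_one] at hdouble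
  rw [hdouble]
  simp only [bipartiteBelow, t, filter_filter]

variable [DecidableEq α] [Fintype β]

theorem filter_not_injective_hammingDist_eq_one_and_ne {x : α → β} (hx : Surjective x) (i : α) :
    ({y | ¬Injective y} : Finset (α → β)).filter (fun y => hammingDist x y = 1 ∧ x i ≠ y i) =
      (univ.erase (x i)).image (update x i) := by
  ext y
  simp only [mem_filter, mem_univ, true_and, and_true, mem_image, mem_erase]
  constructor
  · rintro ⟨-, h, hi⟩
    exact ⟨y i, Ne.symm hi,
      update_eq_iff.mpr ⟨rfl, fun j hj => eq_of_hammingDist_eq_one_of_ne h hi hj⟩⟩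
  · rintro ⟨v, hv, rfl⟩
    exact ⟨hx.not_injective_update hv, hammingDist_update_self_eq_one hv, by simpa using hv.symm⟩

theorem card_filter_not_injective_hammingDist_eq_one_and_ne {x : α → β} (hx : Surjective x)
    (i : α) :
    #(({y | ¬Injective y} : Finset (α → β)).filter
      (fun y => hammingDist x y = 1 ∧ x i ≠ y i)) = Fintype.card β - 1 := by
  rw [filter_not_injective_hammingDist_eq_one_and_ne hx, card_image_of_injective _
    (update_injective x i), card_erase_of_mem (mem_univ _), card_univ]

theorem card_filter_not_injective_hammingDist_eq_one {x : α → β} (hx : Surjective x) :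
    #(({y | ¬Injective y} : Finset (α → β)).filter (fun y => hammingDist x y = 1)) =
      Fintype.card α * (Fintype.card β - 1) := by
  simp only [card_filter_hammingDist_eq_one, card_filter_not_injective_hammingDist_eq_one_and_ne hx,
    sum_const, card_univ, smul_eq_mul]

theorem card_filter_bijective_hammingDist_eq_one_and_ne_le_one (y : α → β) (i : α) :
    #(({x | Bijective x} : Finset (α → β)).filter
      (fun x => hammingDist x y = 1 ∧ x i ≠ y i)) ≤ 1 := by
  refine card_le_one.mpr fun x hx x' hx' => ?_
  simp only [mem_filter, mem_univ, true_and] at hx hx'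
  obtain ⟨hxb, hx1, hxi⟩ := hx
  obtain ⟨hx'b, hx'1, hx'i⟩ := hx'
  refine hxb.surjective.eq_of_injective_of_forall_ne hx'b.injective (i := i) fun j hj => ?_
  rw [eq_of_hammingDist_eq_one_of_ne hx1 hxi hj, eq_of_hammingDist_eq_one_of_ne hx'1 hx'i hj]

theorem card_filter_bijective_hammingDist_eq_one_le_two {y : α → β} (hy : ¬Injective y) :
    #(({x | Bijective x} : Finset (α → β)).filter (fun x => hammingDist x y = 1)) ≤ 2 := by
  obtain ⟨a, b, hab, hne⟩ := not_injective_iff.mp hy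
  let near (i : α) := ({x | Bijective x} : Finset (α → β)).filter
    (fun x => hammingDist x y = 1 ∧ x i ≠ y i)
  have hsub : ({x | Bijective x} : Finset (α → β)).filter (fun x => hammingDist x y = 1) ⊆
      near a ∪ near b := by
    intro x hx
    simp only [near, mem_filter, mem_univ, true_and, mem_union] at hx ⊢
    have hdiff : x a ≠ y a ∨ x b ≠ y b := by
      by_contra! h
      exact hne (hx.1.injective (by rw [h.1, h.2, hab]))
    rcases hdiff with ha | hb
    · exact Or.inl ⟨hx.1, hx.2, ha⟩
    · exact Or.inr ⟨hx.1, hx.2, hb⟩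
  calc _ ≤ #(near a ∪ near b) := card_le_card hsub
    _ ≤ #(near a) + #(near b) := card_union_le _ _
    _ ≤ 1 + 1 := add_le_add (card_filter_bijective_hammingDist_eq_one_and_ne_le_one y a)
        (card_filter_bijective_hammingDist_eq_one_and_ne_le_one y b)

end HammingDistOne

theorem stmt5_general (N : ℕ)
    (X Y : Finset (Fin N → Fin N))
    (hX : X = Finset.univ.filter (fun x => Function.Bijective x))
    (hY : Y = Finset.univ.filter (fun y => ¬ Function.Injective y)) :
    (∀ x ∈ X,
      (Y.filter (fun y => (Finset.univ.filter (fun i => x i ≠ y i)).card = 1)).card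
        = N * (N - 1)) ∧
    (∀ x ∈ X, ∀ i : Fin N,
      (Y.filter (fun y =>
        (Finset.univ.filter (fun j => x j ≠ y j)).card = 1 ∧ x i ≠ y i)).card = N - 1) ∧
    (∀ y ∈ Y,
      (X.filter (fun x => (Finset.univ.filter (fun i => x i ≠ y i)).card = 1)).card ≤ 2) ∧
    (∀ y ∈ Y, ∀ i : Fin N,
      (X.filter (fun x =>
        (Finset.univ.filter (fun j => x j ≠ y j)).card = 1 ∧ x i ≠ y i)).card ≤ 1) := by
  subst hX hY
  -- `hammingDist x y` is by definition `#{i | x i ≠ y i}`, so the lemmas apply up to unfolding.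
  refine ⟨fun x hx => ?_, fun x hx i => ?_, fun y hy => ?_, fun y _ i => ?_⟩
  · have h := card_filter_not_injective_hammingDist_eq_one (mem_filter.mp hx).2.surjective
    rw [Fintype.card_fin] at h
    exact h
  · have h := card_filter_not_injective_hammingDist_eq_one_and_ne (mem_filter.mp hx).2.surjective i
    rw [Fintype.card_fin] at h
    exact h
  · exact card_filter_bijective_hammingDist_eq_one_le_two (mem_filter.mp hy).2
  · exact card_filter_bijective_hammingDist_eq_one_and_ne_le_one y i

/-- Element Distinctness relation counts. `X` = bijections `[N] → [N]`,
`Y` = non-injective functions, `R` relates `x` and `y` iff they differ at exactly one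
index. Then: (a) each `x ∈ X` is related to exactly `N(N-1)` elements of `Y`;
(b) for each `x ∈ X` and index `i` there are exactly `N-1` related `y` differing at `i`;
(c) each `y ∈ Y` is related to at most `2` elements of `X`;
(d) for each `y ∈ Y` and index `i` there is at most `1` related `x` differing at `i`. -/
theorem stmt5 (N : ℕ) (hN : 2 ≤ N)
    (X Y : Finset (Fin N → Fin N))
    (hX : X = Finset.univ.filter (fun x => Function.Bijective x))
    (hY : Y = Finset.univ.filter (fun y => ¬ Function.Injective y)) :
    (∀ x ∈ X,
      (Y.filter (fun y => (Finset.univ.filter (fun i => x i ≠ y i)).card = 1)).card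
        = N * (N - 1)) ∧
    (∀ x ∈ X, ∀ i : Fin N,
      (Y.filter (fun y =>
        (Finset.univ.filter (fun j => x j ≠ y j)).card = 1 ∧ x i ≠ y i)).card = N - 1) ∧
    (∀ y ∈ Y,
      (X.filter (fun x => (Finset.univ.filter (fun i => x i ≠ y i)).card = 1)).card ≤ 2) ∧
    (∀ y ∈ Y, ∀ i : Fin N,
      (X.filter (fun x =>
        (Finset.univ.filter (fun j => x j ≠ y j)).card = 1 ∧ x i ≠ y i)).card ≤ 1) :=
  stmt5_general N X Y hX hY
end

section
/- Let F : S → S' and let w_Q be a valid weight function and s_Q ∈ S'. Define w_P(x,y) = w_Q(x,y) if F(x) = s_Q or F(y) = s_Q, and w_P(x,y) = 0 otherwise. Then w_P is a valid weight function, and for every pair (x,y) with w_P(x,y) > 0 and every i with x(i) ≠ y(i), max( wt_P(x)/v_P(x,i), wt_P(y)/v_P(y,i) ) ≥ min over pairs (z,i) with F(z) = s_Q of wt_Q(z)/v_Q(z,i). Consequently L_P(F) ≥ L_Q^{na}(F), i.e., max over valid w and pairs of the probabilistic adversary quantity is at least max_w max_{s ∈ S'} min_{x,i : F(x)=s} wt(x)/v(x,i).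 -/
/-!
Restricting `w` to the edges that touch the fiber `F⁻¹(s)` keeps it valid, and at a point of
that fiber it changes neither `wt` nor `v`. Every edge of positive restricted weight has an
endpoint in the fiber, so one of the two ratios of the edge is a ratio of `w` over the fiber.

Comparing the suprema needs the candidate values of `L_P` to be bounded above (an unbounded
`sSup` is `0` in Lean): on a heaviest edge `(x, y)` with `x i ≠ y i` we have
`v(x, i) ≥ w(x, y) ≥ w(x, u)` for all `u`, so `wt(x) / v(x, i) ≤ |S|`, and likewise at `y`.
-/

open Finset

namespace AdversaryBound

section Weights

variable {Γ Sig S' : Type*}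

def IsValid (F : (Γ → Sig) → S') (w : (Γ → Sig) → (Γ → Sig) → ℝ) : Prop :=
  (∀ x y, 0 ≤ w x y) ∧ (∀ x y, w x y = w y x) ∧ (∀ x y, F x = F y → w x y = 0)

theorem IsValid.exists_ne_apply {F : (Γ → Sig) → S'} {w : (Γ → Sig) → (Γ → Sig) → ℝ}
    (hw : IsValid F w) {x y : Γ → Sig} (h : 0 < w x y) : ∃ i, x i ≠ y i := by
  refine Function.ne_iff.mp fun hxy => h.ne' (hw.2.2 x y ?_)
  rw [hxy]

variable [DecidableEq S'] (F : (Γ → Sig) → S') (w : (Γ → Sig) → (Γ → Sig) → ℝ) (s : S')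

def restrict : (Γ → Sig) → (Γ → Sig) → ℝ :=
  fun x y => if F x = s ∨ F y = s then w x y else 0

variable {F w s}

theorem restrict_of_left {x : Γ → Sig} (hx : F x = s) (u : Γ → Sig) :
    restrict F w s x u = w x u :=
  if_pos (Or.inl hx)

theorem fiber_left_or_right_of_restrict_pos {x y : Γ → Sig} (h : 0 < restrict F w s x y) :
    F x = s ∨ F y = s := by
  by_contra hxy
  simp [restrict, hxy] at h

theorem IsValid.restrict (hw : IsValid F w) : IsValid F (restrict F w s) := by
  obtain ⟨hnn, hsym, hvan⟩ := hw
  refine ⟨fun x y => ?_, fun x y => ?_, fun x y hxy => ?_⟩ <;> unfold AdversaryBound.restrict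
  · split_ifs
    exacts [hnn x y, le_rfl]
  · simp only [hsym x y, or_comm]
  · simp [hvan x y hxy]

end Weights

variable {Γ Sig S' : Type*} [Fintype Γ] [DecidableEq Γ] [Fintype Sig]

def wt (w : (Γ → Sig) → (Γ → Sig) → ℝ) (x : Γ → Sig) : ℝ := ∑ u, w x u

theorem wt_restrict_of_left [DecidableEq S'] {F : (Γ → Sig) → S'}
    {w : (Γ → Sig) → (Γ → Sig) → ℝ} {s : S'} {x : Γ → Sig} (hx : F x = s) :
    wt (restrict F w s) x = wt w x :=
  sum_congr rfl fun u _ => restrict_of_left hx u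

variable [DecidableEq Sig]

def v (w : (Γ → Sig) → (Γ → Sig) → ℝ) (x : Γ → Sig) (i : Γ) : ℝ :=
  ∑ u ∈ univ.filter (fun u => x i ≠ u i), w x u

theorem v_restrict_of_left [DecidableEq S'] {F : (Γ → Sig) → S'}
    {w : (Γ → Sig) → (Γ → Sig) → ℝ} {s : S'} {x : Γ → Sig} (hx : F x = s) (i : Γ) :
    v (restrict F w s) x i = v w x i :=
  sum_congr rfl fun u _ => restrict_of_left hx u

def pairRatios (w : (Γ → Sig) → (Γ → Sig) → ℝ) : Set ℝ :=
  {q | ∃ x y i, 0 < w x y ∧ x i ≠ y i ∧ q = max (wt w x / v w x i) (wt w y / v w y i)}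

def fiberRatios (F : (Γ → Sig) → S') (w : (Γ → Sig) → (Γ → Sig) → ℝ) (s : S') : Set ℝ :=
  {q | ∃ x i, F x = s ∧ q = wt w x / v w x i}

/-- `L_P(F)`. -/
noncomputable def probBound (F : (Γ → Sig) → S') : ℝ :=
  sSup {r | ∃ w, IsValid F w ∧ r = sInf (pairRatios w)}

/-- `L_Q^{na}(F)`. -/
noncomputable def nonadaptiveBound (F : (Γ → Sig) → S') : ℝ :=
  sSup {r | ∃ w, IsValid F w ∧ ∃ s, r = sInf (fiberRatios F w s)}

variable {F : (Γ → Sig) → S'} {w : (Γ → Sig) → (Γ → Sig) → ℝ}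

theorem ratio_nonneg {x : Γ → Sig} (hnn : ∀ u, 0 ≤ w x u) (i : Γ) : 0 ≤ wt w x / v w x i :=
  div_nonneg (sum_nonneg fun u _ => hnn u) (sum_nonneg fun u _ => hnn u)

theorem fiberRatios_nonneg (hnn : ∀ x y, 0 ≤ w x y) (s : S') :
    ∀ q ∈ fiberRatios F w s, 0 ≤ q := by
  rintro q ⟨x, i, -, rfl⟩
  exact ratio_nonneg (hnn x) i

theorem pairRatios_nonneg (hnn : ∀ x y, 0 ≤ w x y) : ∀ q ∈ pairRatios w, 0 ≤ q := by
  rintro q ⟨x, y, i, -, -, rfl⟩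
  exact (ratio_nonneg (hnn x) i).trans (le_max_left _ _)

theorem ratio_le_card {x y : Γ → Sig} {i : Γ} (hnn : ∀ u, 0 ≤ w x u)
    (hmax : ∀ u, w x u ≤ w x y) (hxy : 0 < w x y) (hi : x i ≠ y i) :
    wt w x / v w x i ≤ Fintype.card (Γ → Sig) := by
  have hv : w x y ≤ v w x i :=
    single_le_sum (fun u _ => hnn u) (mem_filter.mpr ⟨mem_univ y, hi⟩)
  have hwt : wt w x ≤ Fintype.card (Γ → Sig) * w x y :=
    (sum_le_card_nsmul univ (w x) (w x y) fun u _ => hmax u).trans_eq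
      (by rw [card_univ, nsmul_eq_mul])
  rw [div_le_iff₀ (hxy.trans_le hv)]
  calc wt w x ≤ Fintype.card (Γ → Sig) * w x y := hwt
    _ ≤ Fintype.card (Γ → Sig) * v w x i := by gcongr

theorem sInf_pairRatios_le_card (hw : IsValid F w) :
    sInf (pairRatios w) ≤ Fintype.card (Γ → Sig) := by
  obtain ⟨hnn, hsym, -⟩ := id hw
  rcases (pairRatios w).eq_empty_or_nonempty with h | ⟨-, x₀, y₀, -, h₀, -⟩
  · rw [h, Real.sInf_empty]
    positivity
  have : Nonempty ((Γ → Sig) × (Γ → Sig)) := ⟨(x₀, y₀)⟩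
  obtain ⟨⟨x, y⟩, hmax⟩ := Finite.exists_max fun p : (Γ → Sig) × (Γ → Sig) => w p.1 p.2
  have hxy : 0 < w x y := h₀.trans_le (hmax (x₀, y₀))
  obtain ⟨i, hi⟩ := hw.exists_ne_apply hxy
  calc sInf (pairRatios w) ≤ max (wt w x / v w x i) (wt w y / v w y i) :=
        csInf_le ⟨0, pairRatios_nonneg hnn⟩ ⟨x, y, i, hxy, hi, rfl⟩
    _ ≤ _ := max_le (ratio_le_card (hnn x) (fun u => hmax (x, u)) hxy hi)
        (ratio_le_card (hnn y) (fun u => (hmax (y, u)).trans_eq (hsym x y))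
          (hsym x y ▸ hxy) hi.symm)

variable [DecidableEq S'] {s : S'}

theorem sInf_fiberRatios_le_of_restrict_pos (hnn : ∀ x y, 0 ≤ w x y) {x y : Γ → Sig} {i : Γ}
    (h : 0 < restrict F w s x y) :
    sInf (fiberRatios F w s) ≤
      max (wt (restrict F w s) x / v (restrict F w s) x i)
        (wt (restrict F w s) y / v (restrict F w s) y i) := by
  have hbdd : BddBelow (fiberRatios F w s) := ⟨0, fiberRatios_nonneg hnn s⟩
  rcases fiber_left_or_right_of_restrict_pos h with hx | hy
  · rw [wt_restrict_of_left hx, v_restrict_of_left hx]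
    exact (csInf_le hbdd ⟨x, i, hx, rfl⟩).trans (le_max_left _ _)
  · rw [wt_restrict_of_left hy, v_restrict_of_left hy]
    exact (csInf_le hbdd ⟨y, i, hy, rfl⟩).trans (le_max_right _ _)

theorem sInf_fiberRatios_le_sInf_pairRatios_restrict (hw : IsValid F w) :
    sInf (fiberRatios F w s) ≤ sInf (pairRatios (restrict F w s)) := by
  rcases (pairRatios (restrict F w s)).eq_empty_or_nonempty with hempty | hne
  · rw [hempty, Real.sInf_empty]
    refine Real.sInf_nonpos ?_
    rintro q ⟨z, j, hz, rfl⟩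
    -- an edge of positive weight at `z` would survive the restriction
    have hzero : ∀ u, w z u = 0 := fun u => by
      by_contra hu
      have hpos : 0 < restrict F w s z u := by
        rw [restrict_of_left hz]
        exact (hw.1 z u).lt_of_ne' hu
      obtain ⟨i, hi⟩ := hw.restrict.exists_ne_apply hpos
      exact hempty.subset ⟨z, u, i, hpos, hi, rfl⟩
    simp [wt, hzero]
  · refine le_csInf hne ?_
    rintro q ⟨x, y, i, hpos, -, rfl⟩
    exact sInf_fiberRatios_le_of_restrict_pos hw.1 hpos

theorem nonadaptiveBound_le_probBound (F : (Γ → Sig) → S') :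
    nonadaptiveBound F ≤ probBound F := by
  have hbdd : BddAbove {r | ∃ w, IsValid F w ∧ r = sInf (pairRatios w)} := by
    refine ⟨Fintype.card (Γ → Sig), ?_⟩
    rintro r ⟨w, hw, rfl⟩
    exact sInf_pairRatios_le_card hw
  refine Real.sSup_le ?_ (Real.sSup_nonneg ?_)
  · rintro r ⟨w, hw, s, rfl⟩
    exact (sInf_fiberRatios_le_sInf_pairRatios_restrict hw).trans
      (le_csSup hbdd ⟨restrict F w s, hw.restrict, rfl⟩)
  · rintro r ⟨w, hw, rfl⟩
    exact Real.sInf_nonneg (pairRatios_nonneg hw.1)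

end AdversaryBound

open AdversaryBound in
theorem stmt6_general {Γ Sig S' : Type*} [Fintype Γ] [DecidableEq Γ] [Fintype Sig] [DecidableEq Sig]
    [DecidableEq S']
    (F : (Γ → Sig) → S')
    (wQ : (Γ → Sig) → (Γ → Sig) → ℝ)
    (hnn : ∀ x y, 0 ≤ wQ x y) (hsym : ∀ x y, wQ x y = wQ y x)
    (hvan : ∀ x y, F x = F y → wQ x y = 0)
    (sQ : S')
    (wP : (Γ → Sig) → (Γ → Sig) → ℝ)
    (hwP : ∀ x y, wP x y = if F x = sQ ∨ F y = sQ then wQ x y else 0)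
    (LP LQ : ℝ)
    (hLP : LP = sSup {r : ℝ | ∃ w : (Γ → Sig) → (Γ → Sig) → ℝ,
      ((∀ x y, 0 ≤ w x y) ∧ (∀ x y, w x y = w y x) ∧ (∀ x y, F x = F y → w x y = 0)) ∧
      r = sInf {q : ℝ | ∃ x y i, 0 < w x y ∧ x i ≠ y i ∧
        q = max ((∑ u, w x u) / (∑ u ∈ Finset.univ.filter (fun u => x i ≠ u i), w x u))
                ((∑ u, w y u) / (∑ u ∈ Finset.univ.filter (fun u => y i ≠ u i), w y u))}})
    (hLQ : LQ = sSup {r : ℝ | ∃ w : (Γ → Sig) → (Γ → Sig) → ℝ,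
      ((∀ x y, 0 ≤ w x y) ∧ (∀ x y, w x y = w y x) ∧ (∀ x y, F x = F y → w x y = 0)) ∧
      ∃ s : S', r = sInf {q : ℝ | ∃ x i, F x = s ∧
        q = (∑ u, w x u) / (∑ u ∈ Finset.univ.filter (fun u => x i ≠ u i), w x u)}}) :
    ((∀ x y, 0 ≤ wP x y) ∧ (∀ x y, wP x y = wP y x) ∧ (∀ x y, F x = F y → wP x y = 0)) ∧
    (∀ x y i, 0 < wP x y → x i ≠ y i →
      sInf {q : ℝ | ∃ z j, F z = sQ ∧
          q = (∑ u, wQ z u) / (∑ u ∈ Finset.univ.filter (fun u => z j ≠ u j), wQ z u)}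
        ≤ max ((∑ u, wP x u) / (∑ u ∈ Finset.univ.filter (fun u => x i ≠ u i), wP x u))
              ((∑ u, wP y u) / (∑ u ∈ Finset.univ.filter (fun u => y i ≠ u i), wP y u))) ∧
    LQ ≤ LP := by
  obtain rfl : wP = restrict F wQ sQ := funext₂ hwP
  have hwQ : IsValid F wQ := ⟨hnn, hsym, hvan⟩
  exact ⟨hwQ.restrict, fun x y i hpos _ => sInf_fiberRatios_le_of_restrict_pos hnn hpos,
    hLQ ▸ hLP ▸ nonadaptiveBound_le_probBound F⟩

/-- from a valid weight function `w_Q` and a value `s_Q`, the weight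
function `w_P(x,y) = w_Q(x,y)` if `F x = s_Q ∨ F y = s_Q` (and `0` otherwise) is a valid
weight function; for every pair with `w_P x y > 0` and every `i` with `x i ≠ y i`, the
quantity `max(wt_P x / v_P x i, wt_P y / v_P y i)` is at least
`min_{(z,j) : F z = s_Q} wt_Q z / v_Q z j`; consequently `L_P(F) ≥ L_Q^{na}(F)`. -/
theorem stmt6 {Γ Sig S' : Type*} [Fintype Γ] [DecidableEq Γ] [Fintype Sig] [DecidableEq Sig]
    [DecidableEq S'] [Nonempty Γ]
    (F : (Γ → Sig) → S')
    (wQ : (Γ → Sig) → (Γ → Sig) → ℝ)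
    (hnn : ∀ x y, 0 ≤ wQ x y) (hsym : ∀ x y, wQ x y = wQ y x)
    (hvan : ∀ x y, F x = F y → wQ x y = 0)
    (sQ : S') (hsQ : ∃ z, F z = sQ)
    (wP : (Γ → Sig) → (Γ → Sig) → ℝ)
    (hwP : ∀ x y, wP x y = if F x = sQ ∨ F y = sQ then wQ x y else 0)
    (LP LQ : ℝ)
    (hLP : LP = sSup {r : ℝ | ∃ w : (Γ → Sig) → (Γ → Sig) → ℝ,
      ((∀ x y, 0 ≤ w x y) ∧ (∀ x y, w x y = w y x) ∧ (∀ x y, F x = F y → w x y = 0)) ∧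
      r = sInf {q : ℝ | ∃ x y i, 0 < w x y ∧ x i ≠ y i ∧
        q = max ((∑ u, w x u) / (∑ u ∈ Finset.univ.filter (fun u => x i ≠ u i), w x u))
                ((∑ u, w y u) / (∑ u ∈ Finset.univ.filter (fun u => y i ≠ u i), w y u))}})
    (hLQ : LQ = sSup {r : ℝ | ∃ w : (Γ → Sig) → (Γ → Sig) → ℝ,
      ((∀ x y, 0 ≤ w x y) ∧ (∀ x y, w x y = w y x) ∧ (∀ x y, F x = F y → w x y = 0)) ∧
      ∃ s : S', r = sInf {q : ℝ | ∃ x i, F x = s ∧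
        q = (∑ u, w x u) / (∑ u ∈ Finset.univ.filter (fun u => x i ≠ u i), w x u)}}) :
    ((∀ x y, 0 ≤ wP x y) ∧ (∀ x y, wP x y = wP y x) ∧ (∀ x y, F x = F y → wP x y = 0)) ∧
    (∀ x y i, 0 < wP x y → x i ≠ y i →
      sInf {q : ℝ | ∃ z j, F z = sQ ∧
          q = (∑ u, wQ z u) / (∑ u ∈ Finset.univ.filter (fun u => z j ≠ u j), wQ z u)}
        ≤ max ((∑ u, wP x u) / (∑ u ∈ Finset.univ.filter (fun u => x i ≠ u i), wP x u))
              ((∑ u, wP y u) / (∑ u ∈ Finset.univ.filter (fun u => y i ≠ u i), wP y u))) ∧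
    LQ ≤ LP :=
  stmt6_general F wQ hnn hsym hvan sQ wP hwP LP LQ hLP hLQ
end
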